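/- arXiv:2507.05087 — 2 statements merged into one kernel-verified Lean document; each statement's English description precedes it below -/
import Mathlib

section
/- Let G₁ and G₂ be torsion-free hyperbolic groups, let P < G₁ × G₂ be a finitely generated subdirect product, and let Q = G₁/(G₁ ∩ P). Then the membership problem for P in G₁ × G₂ is solvable if and only if the word problem in Q is solvable. -/
open Classical

/-- Words in `m` generators: letters paired with a sign. -/
abbrev Word (m : ℕ) : Type := List (Fin m × Bool)

/-- Evaluate a word in a group, given an interpretation of the generators. -/
def evalWord {G : Type*} [Group G] {m : ℕ} (π : Fin m → G) (w : Word m) : G :=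
  (w.map fun p => if p.2 then π p.1 else (π p.1)⁻¹).prod

/-- `π` is a finite generating map for `G`. -/
def Generates {G : Type*} [Group G] {m : ℕ} (π : Fin m → G) : Prop :=
  Subgroup.closure (Set.range π) = ⊤

/-- Word length of the image of `g` in the quotient of `G` by `N`,
with respect to the images of the generators. -/
noncomputable def qlen {G : Type*} [Group G] {m : ℕ} (π : Fin m → G) (N : Subgroup G)
    (g : G) : ℕ :=
  sInf { n | ∃ w : Word m, w.length = n ∧ (evalWord π w)⁻¹ * g ∈ N }

/-- Word length in `G`. -/
noncomputable def wlen {G : Type*} [Group G] {m : ℕ} (π : Fin m → G) (g : G) : ℕ :=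
  qlen π ⊥ g

/-- Word metric on `G`. -/
noncomputable def wdist {G : Type*} [Group G] {m : ℕ} (π : Fin m → G) (g h : G) : ℕ :=
  wlen π (g⁻¹ * h)

/-- `γ 0, …, γ n` is a geodesic (of length `n`) in the word metric. -/
def IsGeodesic {G : Type*} [Group G] {m : ℕ} (π : Fin m → G) (n : ℕ) (γ : ℕ → G) : Prop :=
  ∀ i j : ℕ, i ≤ n → j ≤ n → wdist π (γ i) (γ j) = ((i : ℤ) - (j : ℤ)).natAbs

/-- Every geodesic triangle in the Cayley graph is `δ`-slim: each side lies in the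
`δ`-neighbourhood of the union of the other two. -/
def SlimTriangles {G : Type*} [Group G] {m : ℕ} (π : Fin m → G) (δ : ℕ) : Prop :=
  ∀ (x y z : G) (γ₁ γ₂ γ₃ : ℕ → G),
    IsGeodesic π (wdist π x y) γ₁ → γ₁ 0 = x → γ₁ (wdist π x y) = y →
    IsGeodesic π (wdist π y z) γ₂ → γ₂ 0 = y → γ₂ (wdist π y z) = z →
    IsGeodesic π (wdist π x z) γ₃ → γ₃ 0 = x → γ₃ (wdist π x z) = z →
    ∀ i ≤ wdist π x y, ∃ j : ℕ,
      (j ≤ wdist π y z ∧ wdist π (γ₁ i) (γ₂ j) ≤ δ) ∨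
      (j ≤ wdist π x z ∧ wdist π (γ₁ i) (γ₃ j) ≤ δ)

/-- The marking `π` exhibits `G` as a (word-)hyperbolic group. -/
def HyperbolicMarking {G : Type*} [Group G] {m : ℕ} (π : Fin m → G) : Prop :=
  ∃ δ : ℕ, SlimTriangles π δ

/-- `G` is a word-hyperbolic group. -/
def IsHyperbolicGroup (G : Type*) [Group G] : Prop :=
  ∃ (m : ℕ) (π : Fin m → G), Generates π ∧ HyperbolicMarking π

/-- The word problem in `G` is solvable. -/
def HasSolvableWordProblem (G : Type*) [Group G] : Prop :=
  ∃ (m : ℕ) (π : Fin m → G), Generates π ∧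
    ComputablePred fun w : Word m => evalWord π w = 1

/-- The conjugacy problem in `G` is solvable. -/
def HasSolvableConjugacyProblem (G : Type*) [Group G] : Prop :=
  ∃ (m : ℕ) (π : Fin m → G), Generates π ∧
    ComputablePred fun uv : Word m × Word m => IsConj (evalWord π uv.1) (evalWord π uv.2)

/-- The membership problem for the subgroup `P` of `G` is solvable. -/
def HasSolvableMembershipProblem (G : Type*) [Group G] (P : Subgroup G) : Prop :=
  ∃ (m : ℕ) (π : Fin m → G), Generates π ∧
    ComputablePred fun w : Word m => evalWord π w ∈ P

/-- The word problem in the quotient `G/N` is solvable. -/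
def HasSolvableWordProblemMod (G : Type*) [Group G] (N : Subgroup G) : Prop :=
  ∃ (m : ℕ) (π : Fin m → G), Generates π ∧
    ComputablePred fun w : Word m => evalWord π w ∈ N

/-- The power problem in the quotient `G/N` is solvable: one can decide membership
of cyclic subgroups of `G/N`. -/
def HasSolvablePowerProblemMod (G : Type*) [Group G] (N : Subgroup G) : Prop :=
  ∃ (m : ℕ) (π : Fin m → G), Generates π ∧
    ComputablePred fun uv : Word m × Word m =>
      ∃ p : ℤ, evalWord π uv.1 * (evalWord π uv.2) ^ p ∈ N

/-- `w` is a product of `M` conjugates of relators from `R ∪ R⁻¹`. -/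
def IsAreaExpr {m : ℕ} (R : Finset (FreeGroup (Fin m))) (w : FreeGroup (Fin m)) (M : ℕ) : Prop :=
  ∃ r θ : Fin M → FreeGroup (Fin m),
    (∀ i, r i ∈ R ∨ (r i)⁻¹ ∈ R) ∧
    w = (List.ofFn fun i => (θ i)⁻¹ * r i * θ i).prod

/-- The area of a word `w` lying in the normal closure of `R`. -/
noncomputable def area {m : ℕ} (R : Finset (FreeGroup (Fin m))) (w : FreeGroup (Fin m)) : ℕ :=
  sInf { M | IsAreaExpr R w M }

/-- The Dehn function of the finite presentation `⟨Fin m ∣ R⟩`. -/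
noncomputable def dehn {m : ℕ} (R : Finset (FreeGroup (Fin m))) (n : ℕ) : ℕ :=
  sSup { A | ∃ w : FreeGroup (Fin m), FreeGroup.norm w ≤ n ∧
      w ∈ Subgroup.normalClosure (R : Set (FreeGroup (Fin m))) ∧ A = area R w }

/-- `2|p| ≤ o(u)`, i.e. `|p| ≤ o(u)/2`, where `o(u)` is the order of the image of `u`
in the group presented by `⟨Fin m ∣ R⟩`. -/
def HalfOrderBound {m : ℕ} (R : Finset (FreeGroup (Fin m))) (u : FreeGroup (Fin m))
    (p : ℤ) : Prop :=
  ∀ k : ℕ, 0 < k → u ^ k ∈ Subgroup.normalClosure (R : Set (FreeGroup (Fin m))) →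
    2 * p.natAbs ≤ k

/-- The rel-cyclics Dehn function of the finite presentation `⟨Fin m ∣ R⟩`. -/
noncomputable def relCyclicsDehn {m : ℕ} (R : Finset (FreeGroup (Fin m))) (n : ℕ) : ℕ :=
  sSup { A | ∃ (w u : FreeGroup (Fin m)) (p : ℤ),
      FreeGroup.norm w + FreeGroup.norm u ≤ n ∧
      w * u ^ p ∈ Subgroup.normalClosure (R : Set (FreeGroup (Fin m))) ∧
      HalfOrderBound R u p ∧
      A = area R (w * u ^ p) + p.natAbs * n }

/-- A monoid is torsion-free if every non-identity element has infinite order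
(the definition of `Monoid.IsTorsionFree` in the older Mathlib, now removed). -/
def Monoid.IsTorsionFree (G : Type*) [Monoid G] : Prop :=
  ∀ g : G, g ≠ 1 → ¬IsOfFinOrder g


section Helpers

variable {G H : Type*} [Group G] [Group H] {m k : ℕ}

theorem evalWord_cons (π : Fin m → G) (a : Fin m × Bool) (w : Word m) :
    evalWord π (a :: w) = (if a.2 then π a.1 else (π a.1)⁻¹) * evalWord π w := by
  simp [evalWord]

theorem evalWord_append (π : Fin m → G) (v w : Word m) :
    evalWord π (v ++ w) = evalWord π v * evalWord π w := by
  simp [evalWord]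

/-- The formal inverse of a word. -/
def invWord (w : Word m) : Word m := (w.map fun p => (p.1, !p.2)).reverse

theorem evalWord_invWord (π : Fin m → G) (w : Word m) :
    evalWord π (invWord w) = (evalWord π w)⁻¹ := by
  induction w with
  | nil => simp [invWord, evalWord]
  | cons a w ih =>
    have h : invWord (a :: w) = invWord w ++ [(a.1, !a.2)] := by simp [invWord]
    obtain ⟨i, b⟩ := a
    rw [h, evalWord_append, ih, evalWord_cons]
    cases b <;> simp [evalWord, mul_inv_rev]

theorem evalWord_hom (f : G →* H) (π : Fin m → G) (w : Word m) :
    evalWord (fun i => f (π i)) w = f (evalWord π w) := by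
  induction w with
  | nil => simp [evalWord]
  | cons a w ih =>
    obtain ⟨i, b⟩ := a
    rw [evalWord_cons, evalWord_cons, ih]
    cases b <;> simp

theorem evalWord_mem {K : Subgroup G} {π : Fin m → G} (h : ∀ i, π i ∈ K) (w : Word m) :
    evalWord π w ∈ K := by
  induction w with
  | nil => simpa [evalWord] using K.one_mem
  | cons a w ih =>
    obtain ⟨i, b⟩ := a
    rw [evalWord_cons]
    exact mul_mem (by cases b <;> simp [h i, inv_mem (h i)]) ih

theorem exists_word {π : Fin m → G} (h : Generates π) (g : G) :
    ∃ w : Word m, evalWord π w = g := by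
  have hg : g ∈ Subgroup.closure (Set.range π) := by rw [h]; trivial
  induction hg using Subgroup.closure_induction with
  | mem x hx => obtain ⟨i, rfl⟩ := hx; exact ⟨[(i, true)], by simp [evalWord]⟩
  | one => exact ⟨[], rfl⟩
  | mul x y _ _ hx hy =>
    obtain ⟨v, rfl⟩ := hx; obtain ⟨w, rfl⟩ := hy
    exact ⟨v ++ w, evalWord_append π v w⟩
  | inv x _ hx =>
    obtain ⟨v, rfl⟩ := hx
    exact ⟨invWord v, evalWord_invWord π v⟩

/-- Substitute a word for each generator. -/
def wordSubst (c : Fin k → Word m) (w : Word k) : Word m :=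
  (w.map fun p => if p.2 then c p.1 else invWord (c p.1)).flatten

theorem evalWord_wordSubst (π : Fin m → G) (c : Fin k → Word m) (w : Word k) :
    evalWord π (wordSubst c w) = evalWord (fun j => evalWord π (c j)) w := by
  induction w with
  | nil => rfl
  | cons a w ih =>
    have h : wordSubst c (a :: w) =
        (if a.2 then c a.1 else invWord (c a.1)) ++ wordSubst c w := by simp [wordSubst]
    obtain ⟨i, b⟩ := a
    rw [h, evalWord_append, ih, evalWord_cons]
    cases b <;> simp [evalWord_invWord]

theorem primrec_invWord : Primrec (invWord (m := m)) :=
  Primrec.list_reverse.comp (Primrec.list_map Primrec.id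
    (((Primrec.dom_finite fun p : Fin m × Bool => ((p.1, !p.2) : Fin m × Bool)).comp
      Primrec.snd).to₂))

theorem primrec_wordSubst (c : Fin k → Word m) : Primrec (wordSubst c) :=
  Primrec.list_flatten.comp (Primrec.list_map Primrec.id
    (((Primrec.dom_finite fun p : Fin k × Bool =>
        if p.2 then c p.1 else invWord (c p.1)).comp Primrec.snd).to₂))

theorem computablePred_congr {α : Type} [Primcodable α] {p q : α → Prop}
    (hp : ComputablePred p) (h : ∀ a, q a ↔ p a) : ComputablePred q := by
  obtain ⟨g, hg, rfl⟩ := ComputablePred.computable_iff.1 hp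
  exact ComputablePred.computable_iff.2 ⟨g, hg, funext fun a => propext (h a)⟩

theorem computablePred_comp {α β : Type} [Primcodable α] [Primcodable β] {p : β → Prop}
    (hp : ComputablePred p) {f : α → β} (hf : Computable f) :
    ComputablePred fun a => p (f a) := by
  obtain ⟨g, hg, rfl⟩ := ComputablePred.computable_iff.1 hp
  exact ComputablePred.computable_iff.2 ⟨fun a => g (f a), hg.comp hf, rfl⟩

end Helpers

section Helpers2

variable {G H : Type*} [Group G] [Group H] {m k : ℕ}

theorem evalWord_congr {π π' : Fin m → G} (h : ∀ i, π i = π' i) (w : Word m) :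
    evalWord π w = evalWord π' w := by rw [show π = π' from funext h]

theorem evalWord_fst (π : Fin m → G × H) (w : Word m) :
    (evalWord π w).1 = evalWord (fun i => (π i).1) w :=
  (evalWord_hom (MonoidHom.fst G H) π w).symm

theorem evalWord_snd (π : Fin m → G × H) (w : Word m) :
    (evalWord π w).2 = evalWord (fun i => (π i).2) w :=
  (evalWord_hom (MonoidHom.snd G H) π w).symm

theorem evalWord_single (π : Fin m → G) (i : Fin m) :
    evalWord π [(i, true)] = π i := by simp [evalWord]

/-- The word deleting the second block of generators. -/
def leftWord {k : ℕ} : Fin (k + k) → Word k :=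
  Fin.addCases (fun i => [(i, true)]) (fun _ => [])

/-- The word remembering the index of a generator in either block. -/
def bothWord {k : ℕ} : Fin (k + k) → Word k :=
  Fin.addCases (fun i => [(i, true)]) (fun i => [(i, true)])

theorem leftWord_castAdd (i : Fin k) : leftWord (Fin.castAdd k i) = [(i, true)] :=
  Fin.addCases_left i

theorem leftWord_natAdd (i : Fin k) : leftWord (Fin.natAdd k i) = [] :=
  Fin.addCases_right i

theorem bothWord_castAdd (i : Fin k) : bothWord (Fin.castAdd k i) = [(i, true)] :=
  Fin.addCases_left i

theorem bothWord_natAdd (i : Fin k) : bothWord (Fin.natAdd k i) = [(i, true)] :=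
  Fin.addCases_right i

end Helpers2

section Helpers3

variable {G H : Type*} [Group G] [Group H] {k : ℕ}

/-- Extend a tuple in `G × H` by the "second coordinates only" tuple. -/
def extPair (pg : Fin k → G × H) : Fin (k + k) → G × H :=
  Fin.addCases pg (fun i => ((1 : G), (pg i).2))

omit [Group H] in
theorem extPair_castAdd (pg : Fin k → G × H) (i : Fin k) :
    extPair pg (Fin.castAdd k i) = pg i := Fin.addCases_left i

omit [Group H] in
theorem extPair_natAdd (pg : Fin k → G × H) (i : Fin k) :
    extPair pg (Fin.natAdd k i) = ((1 : G), (pg i).2) := Fin.addCases_right i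

end Helpers3

/-- The membership problem for the finitely generated subdirect product `P < G₁ × G₂` is
solvable if and only if the word problem in `Q = G₁/(G₁ ∩ P)` is solvable. -/
theorem membership_iff_word
    (G₁ G₂ : Type) [Group G₁] [Group G₂]
    (hhyp₁ : IsHyperbolicGroup G₁) (hhyp₂ : IsHyperbolicGroup G₂)
    (htf₁ : Monoid.IsTorsionFree G₁) (htf₂ : Monoid.IsTorsionFree G₂)
    (P : Subgroup (G₁ × G₂)) (hfg : P.FG)
    (hs₁ : P.map (MonoidHom.fst G₁ G₂) = ⊤)
    (hs₂ : P.map (MonoidHom.snd G₁ G₂) = ⊤) :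
    HasSolvableMembershipProblem (G₁ × G₂) P ↔
      HasSolvableWordProblemMod G₁ (P.comap (MonoidHom.inl G₁ G₂)) := by
  classical
  -- a finite generating tuple for `P`
  obtain ⟨k, pg, hclos⟩ : ∃ (k : ℕ) (pg : Fin k → G₁ × G₂),
      Subgroup.closure (Set.range pg) = P := by
    obtain ⟨S, hS⟩ := hfg
    refine ⟨S.card, fun i => (S.equivFin.symm i : G₁ × G₂), ?_⟩
    have h : Set.range (fun i => (S.equivFin.symm i : G₁ × G₂)) = (S : Set (G₁ × G₂)) := by
      ext x
      constructor
      · rintro ⟨i, rfl⟩; exact (S.equivFin.symm i).2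
      · intro hx; exact ⟨S.equivFin ⟨x, hx⟩, by simp⟩
    rw [h, hS]
  have hpgP : ∀ i, pg i ∈ P := fun i => hclos ▸ Subgroup.subset_closure ⟨i, rfl⟩
  have hx₁gen : Generates (fun i => (pg i).1) := by
    unfold Generates
    have h1 : Set.range (fun i => (pg i).1) = (MonoidHom.fst G₁ G₂) '' Set.range pg := by
      rw [← Set.range_comp]; rfl
    rw [h1, ← MonoidHom.map_closure, hclos, hs₁]
  have hygen : Subgroup.closure (Set.range (fun i => (pg i).2)) = (⊤ : Subgroup G₂) := by
    have h1 : Set.range (fun i => (pg i).2) = (MonoidHom.snd G₁ G₂) '' Set.range pg := by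
      rw [← Set.range_comp]; rfl
    rw [h1, ← MonoidHom.map_closure, hclos, hs₂]
  constructor
  · -- membership problem ⟹ word problem in the quotient
    rintro ⟨m, π, hπ, hcomp⟩
    choose c hc using fun i : Fin k => exists_word hπ ((MonoidHom.inr G₁ G₂) ((pg i).2))
    refine ⟨k, fun i => (pg i).1, hx₁gen,
      computablePred_congr (computablePred_comp hcomp (primrec_wordSubst c).to_comp) ?_⟩
    intro v
    have h1 : evalWord π (wordSubst c v) =
        (MonoidHom.inr G₁ G₂) (evalWord (fun i => (pg i).2) v) := by
      rw [evalWord_wordSubst]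
      exact (evalWord_congr (fun j => hc j) v).trans
        (evalWord_hom (MonoidHom.inr G₁ G₂) (fun i => (pg i).2) v)
    have hq : evalWord pg v ∈ P := evalWord_mem hpgP v
    have hfst : (evalWord pg v).1 = evalWord (fun i => (pg i).1) v := evalWord_fst pg v
    have hsnd : (evalWord pg v).2 = evalWord (fun i => (pg i).2) v := evalWord_snd pg v
    rw [Subgroup.mem_comap, h1]
    constructor
    · intro hg
      have h2 := mul_mem (inv_mem hg) hq
      have h3 : ((MonoidHom.inl G₁ G₂) (evalWord (fun i => (pg i).1) v))⁻¹ * evalWord pg v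
          = (MonoidHom.inr G₁ G₂) (evalWord (fun i => (pg i).2) v) := by
        apply Prod.ext
        · simp [← hfst]
        · simp [← hsnd]
      rwa [h3] at h2
    · intro hh
      have h2 := mul_mem hq (inv_mem hh)
      have h3 : evalWord pg v * ((MonoidHom.inr G₁ G₂) (evalWord (fun i => (pg i).2) v))⁻¹
          = (MonoidHom.inl G₁ G₂) (evalWord (fun i => (pg i).1) v) := by
        apply Prod.ext
        · simp [← hfst]
        · simp [← hsnd]
      rwa [h3] at h2
  · -- word problem in the quotient ⟹ membership problem
    rintro ⟨m, σ, hσ, hcomp⟩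
    choose c' hc' using fun i : Fin k => exists_word hσ ((pg i).1)
    refine ⟨k + k, extPair pg, ?_, ?_⟩
    · -- the extended tuple generates `G₁ × G₂`
      rw [Generates, eq_top_iff]
      have hPle : P ≤ Subgroup.closure
          (Set.range (extPair pg)) := by
        rw [← hclos, Subgroup.closure_le]
        rintro x ⟨i, rfl⟩
        exact Subgroup.subset_closure ⟨Fin.castAdd k i, extPair_castAdd pg i⟩
      have hinr : ∀ h : G₂, ((1, h) : G₁ × G₂) ∈ Subgroup.closure
          (Set.range (extPair pg)) := by
        intro h
        have h2 : h ∈ Subgroup.closure (Set.range fun i => (pg i).2) := by rw [hygen]; trivial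
        have h3 : Subgroup.closure (Set.range fun i => (pg i).2) ≤
            (Subgroup.closure (Set.range (extPair pg))).comap (MonoidHom.inr G₁ G₂) := by
          rw [Subgroup.closure_le]
          rintro x ⟨i, rfl⟩
          simp only [SetLike.mem_coe, Subgroup.mem_comap]
          refine Subgroup.subset_closure ⟨Fin.natAdd k i, ?_⟩
          rw [extPair_natAdd]
          rfl
        exact h3 h2
      rintro ⟨g, h⟩ -
      obtain ⟨q, hqP, hq1⟩ : ∃ q ∈ P, (MonoidHom.fst G₁ G₂) q = g := by
        have h4 : g ∈ P.map (MonoidHom.fst G₁ G₂) := by rw [hs₁]; trivial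
        simpa [Subgroup.mem_map] using h4
      have h5 : ((g, h) : G₁ × G₂) = q * (1, q.2⁻¹ * h) := by
        obtain ⟨q1, q2⟩ := q
        simp only [MonoidHom.coe_fst] at hq1
        simp [Prod.ext_iff, ← hq1]
      rw [h5]
      exact mul_mem (hPle hqP) (hinr _)
    · -- decidability of membership
      refine computablePred_congr (computablePred_comp hcomp
        (((primrec_wordSubst c').comp (Primrec₂.comp Primrec.list_append
          (primrec_invWord.comp (primrec_wordSubst (leftWord (k := k))))
          (primrec_wordSubst (bothWord (k := k))))).to_comp)) ?_
      intro w
      have hq : evalWord pg (wordSubst leftWord w) ∈ P := evalWord_mem hpgP _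
      have hr : evalWord pg (invWord (wordSubst leftWord w) ++ wordSubst bothWord w) ∈ P :=
        evalWord_mem hpgP _
      -- the first coordinates of `q` and `t` agree
      have hpt1 : ∀ j : Fin (k + k),
          evalWord (fun i => (pg i).1) (leftWord j) =
            (extPair pg j).1 := fun j => by
        refine Fin.addCases (motive := fun j =>
          evalWord (fun i => (pg i).1) (leftWord j) =
            (extPair pg j).1) (fun i => ?_) (fun i => ?_) j
        · beta_reduce
          rw [leftWord_castAdd, evalWord_single, extPair_castAdd]
        · beta_reduce
          rw [leftWord_natAdd, extPair_natAdd]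
          rfl
      have hpt2 : ∀ j : Fin (k + k),
          evalWord (fun i => (pg i).2) (bothWord j) =
            (extPair pg j).2 := fun j => by
        refine Fin.addCases (motive := fun j =>
          evalWord (fun i => (pg i).2) (bothWord j) =
            (extPair pg j).2) (fun i => ?_) (fun i => ?_) j
        · beta_reduce
          rw [bothWord_castAdd, evalWord_single, extPair_castAdd]
        · beta_reduce
          rw [bothWord_natAdd, evalWord_single, extPair_natAdd]
      have h1 : (evalWord pg (wordSubst leftWord w)).1 =
          (evalWord (extPair pg) w).1 := by
        rw [evalWord_fst, evalWord_fst, evalWord_wordSubst]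
        exact evalWord_congr hpt1 w
      -- the second coordinate of `r`
      have hboth : evalWord (fun i => (pg i).2) (wordSubst bothWord w) =
          (evalWord (extPair pg) w).2 := by
        rw [evalWord_snd, evalWord_wordSubst]
        exact evalWord_congr hpt2 w
      have h2 : (evalWord pg (invWord (wordSubst leftWord w) ++ wordSubst bothWord w)).2 =
          (evalWord pg (wordSubst leftWord w)).2⁻¹ *
            (evalWord (extPair pg) w).2 := by
        calc (evalWord pg (invWord (wordSubst leftWord w) ++ wordSubst bothWord w)).2
            = evalWord (fun i => (pg i).2)
                (invWord (wordSubst leftWord w) ++ wordSubst bothWord w) := evalWord_snd pg _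
          _ = evalWord (fun i => (pg i).2) (invWord (wordSubst leftWord w)) *
                evalWord (fun i => (pg i).2) (wordSubst bothWord w) := evalWord_append _ _ _
          _ = (evalWord (fun i => (pg i).2) (wordSubst leftWord w))⁻¹ *
                evalWord (fun i => (pg i).2) (wordSubst bothWord w) := by
              rw [evalWord_invWord]
          _ = (evalWord pg (wordSubst leftWord w)).2⁻¹ *
                (evalWord (extPair pg) w).2 := by
              rw [evalWord_snd pg, hboth]
      -- the value handed to the word-problem oracle is the first coordinate of `r`
      have hFeq : evalWord σ (wordSubst c'
            (invWord (wordSubst leftWord w) ++ wordSubst bothWord w)) =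
          (evalWord pg (invWord (wordSubst leftWord w) ++ wordSubst bothWord w)).1 := by
        rw [evalWord_fst, evalWord_wordSubst]
        exact evalWord_congr (fun j => hc' j) _
      have key : evalWord (extPair pg) w =
          evalWord pg (wordSubst leftWord w) *
            (((MonoidHom.inl G₁ G₂)
              ((evalWord pg (invWord (wordSubst leftWord w) ++ wordSubst bothWord w)).1))⁻¹ *
              evalWord pg (invWord (wordSubst leftWord w) ++ wordSubst bothWord w)) := by
        apply Prod.ext
        · simp [← h1]
        · simp [h2, ← mul_assoc]
      rw [key, Subgroup.mul_mem_cancel_left P hq, Subgroup.mul_mem_cancel_right P hr,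
        inv_mem_iff, Subgroup.mem_comap, hFeq]
end

section
/- Let Q be a finitely presented group and let ⟨X | R⟩ and ⟨X' | R'⟩ be two finite presentations of Q, with rel-cyclics Dehn functions δ^c and δ'^c respectively. Then δ^c ≃ δ'^c, i.e. the rel-cyclics Dehn function of a finitely presented group is independent of the chosen finite presentation up to coarse bi-Lipschitz equivalence of functions. -/
open Classical

namespace RelCycAux

/-- product of conjugates `θ⁻¹ r θ` for `(r, θ)` in the list. -/
def pc {m : ℕ} (l : List (FreeGroup (Fin m) × FreeGroup (Fin m))) : FreeGroup (Fin m) :=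
  (l.map fun p => p.2⁻¹ * p.1 * p.2).prod

def Valid {m : ℕ} (R : Finset (FreeGroup (Fin m)))
    (l : List (FreeGroup (Fin m) × FreeGroup (Fin m))) : Prop :=
  ∀ p ∈ l, p.1 ∈ R ∨ p.1⁻¹ ∈ R

variable {m m' : ℕ}

lemma pc_nil : pc ([] : List (FreeGroup (Fin m) × FreeGroup (Fin m))) = 1 := rfl

lemma pc_cons (h : FreeGroup (Fin m) × FreeGroup (Fin m)) (t) :
    pc (h :: t) = h.2⁻¹ * h.1 * h.2 * pc t := by
  simp [pc]

lemma pc_append (a b : List (FreeGroup (Fin m) × FreeGroup (Fin m))) :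
    pc (a ++ b) = pc a * pc b := by
  simp [pc]

lemma pc_conj (l : List (FreeGroup (Fin m) × FreeGroup (Fin m))) (g : FreeGroup (Fin m)) :
    pc (l.map fun p => (p.1, p.2 * g)) = g⁻¹ * pc l * g := by
  induction l with
  | nil => simp [pc]
  | cons h t ih =>
      rw [List.map_cons, pc_cons, ih, pc_cons]
      group

lemma pc_inv (l : List (FreeGroup (Fin m) × FreeGroup (Fin m))) :
    pc (l.reverse.map fun p => (p.1⁻¹, p.2)) = (pc l)⁻¹ := by
  induction l with
  | nil => simp [pc]
  | cons h t ih =>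
      rw [List.reverse_cons, List.map_append, pc_append, ih, pc_cons, List.map_cons,
        List.map_nil, pc_cons, pc_nil]
      group

lemma exists_pc_of_mem {R : Finset (FreeGroup (Fin m))} {w : FreeGroup (Fin m)}
    (h : w ∈ Subgroup.normalClosure (R : Set (FreeGroup (Fin m)))) :
    ∃ l, Valid R l ∧ pc l = w := by
  induction h using Subgroup.closure_induction with
  | mem x hx =>
      obtain ⟨a, ha, hconj⟩ := Group.mem_conjugatesOfSet_iff.mp hx
      obtain ⟨c, rfl⟩ := isConj_iff.mp hconj
      exact ⟨[(a, c⁻¹)], fun p hp => by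
        simp only [List.mem_singleton] at hp; subst hp; exact Or.inl ha,
        by rw [pc_cons, pc_nil]; group⟩
  | one => exact ⟨[], fun p hp => absurd hp List.not_mem_nil, rfl⟩
  | mul x y _ _ hx hy =>
      obtain ⟨lx, hvx, hpx⟩ := hx
      obtain ⟨ly, hvy, hpy⟩ := hy
      exact ⟨lx ++ ly, fun p hp => by
        rcases List.mem_append.mp hp with h | h
        exacts [hvx p h, hvy p h], by rw [pc_append, hpx, hpy]⟩
  | inv x _ hx =>
      obtain ⟨l, hv, hp⟩ := hx
      refine ⟨l.reverse.map fun p => (p.1⁻¹, p.2), fun p hp => ?_, by rw [pc_inv, hp]⟩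
      obtain ⟨q, hq, rfl⟩ := List.mem_map.mp hp
      rcases hv q (List.mem_reverse.mp hq) with h | h
      · exact Or.inr (by simpa using h)
      · exact Or.inl h

lemma isAreaExpr_iff {R : Finset (FreeGroup (Fin m))} {w : FreeGroup (Fin m)} {M : ℕ} :
    IsAreaExpr R w M ↔ ∃ l, l.length = M ∧ Valid R l ∧ pc l = w := by
  constructor
  · rintro ⟨r, θ, hr, hw⟩
    refine ⟨List.ofFn fun i => (r i, θ i), by simp, fun p hp => ?_, ?_⟩
    · obtain ⟨i, rfl⟩ := Set.mem_range.mp ((List.mem_ofFn' _ _).mp hp)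
      exact hr i
    · rw [pc, List.map_ofFn, hw]; rfl
  · rintro ⟨l, rfl, hv, rfl⟩
    refine ⟨fun i => (l.get i).1, fun i => (l.get i).2, fun i => hv _ (l.get_mem _), ?_⟩
    rw [pc, ← List.ofFn_getElem_eq_map]; rfl

lemma area_le {R : Finset (FreeGroup (Fin m))} {w : FreeGroup (Fin m)} (l)
    (hv : Valid R l) (hw : pc l = w) : area R w ≤ l.length :=
  Nat.sInf_le (isAreaExpr_iff.mpr ⟨l, rfl, hv, hw⟩)

lemma exists_min_pc {R : Finset (FreeGroup (Fin m))} {w : FreeGroup (Fin m)}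
    (h : w ∈ Subgroup.normalClosure (R : Set (FreeGroup (Fin m)))) :
    ∃ l, Valid R l ∧ pc l = w ∧ l.length = area R w := by
  obtain ⟨l0, hv0, hp0⟩ := exists_pc_of_mem h
  have hne : { M | IsAreaExpr R w M }.Nonempty :=
    ⟨l0.length, isAreaExpr_iff.mpr ⟨l0, rfl, hv0, hp0⟩⟩
  obtain ⟨l, hl, hv, hp⟩ := isAreaExpr_iff.mp (Nat.sInf_mem hne)
  exact ⟨l, hv, hp, hl⟩

lemma norm_pow_le (u : FreeGroup (Fin m)) (k : ℕ) :
    FreeGroup.norm (u ^ k) ≤ k * FreeGroup.norm u := by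
  induction k with
  | zero => simp [FreeGroup.norm_one]
  | succ k ih =>
      rw [pow_succ]
      calc FreeGroup.norm (u ^ k * u) ≤ FreeGroup.norm (u ^ k) + FreeGroup.norm u :=
            FreeGroup.norm_mul_le _ _
        _ ≤ k * FreeGroup.norm u + FreeGroup.norm u := by omega
        _ = (k + 1) * FreeGroup.norm u := by ring

lemma norm_zpow_le (u : FreeGroup (Fin m)) (p : ℤ) :
    FreeGroup.norm (u ^ p) ≤ p.natAbs * FreeGroup.norm u := by
  cases p with
  | ofNat k => rw [Int.ofNat_eq_coe, zpow_natCast]; exact norm_pow_le u k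
  | negSucc k =>
      rw [zpow_negSucc, FreeGroup.norm_inv_eq]
      simpa using norm_pow_le u (k + 1)

lemma exists_head' {w : FreeGroup (Fin m)} (h : w ≠ 1) :
    ∃ (x : Fin m × Bool) (v : FreeGroup (Fin m)),
      w = FreeGroup.mk [x] * v ∧ FreeGroup.norm v + 1 = FreeGroup.norm w := by
  have hl : w.toWord ≠ [] := fun hh => h (FreeGroup.toWord_eq_nil_iff.mp hh)
  obtain ⟨x, t, ht⟩ := List.exists_cons_of_ne_nil hl
  have hred : FreeGroup.reduce (x :: t) = x :: t := by rw [← ht]; exact FreeGroup.reduce_toWord w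
  have hredt : FreeGroup.reduce t = t := by
    have h1 : FreeGroup.Red (FreeGroup.reduce (x :: t)) (x :: FreeGroup.reduce t) := by
      rw [hred]; exact FreeGroup.Red.cons_cons (FreeGroup.reduce.red)
    have h2 := FreeGroup.reduce.min h1
    rw [hred] at h2
    exact (List.cons.injEq .. ▸ h2 : _ ∧ _).2.symm
  refine ⟨x, FreeGroup.mk t, ?_, ?_⟩
  · rw [FreeGroup.mul_mk, List.singleton_append, ← ht, FreeGroup.mk_toWord]
  · have h3 : FreeGroup.norm (FreeGroup.mk t) = t.length := by
      rw [FreeGroup.norm, FreeGroup.toWord_mk, hredt]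
    have h4 : FreeGroup.norm w = t.length + 1 := by
      rw [FreeGroup.norm, ht, List.length_cons]
    omega

lemma mk_single (i : Fin m) (b : Bool) :
    FreeGroup.mk [(i, b)] = if b then FreeGroup.of i else (FreeGroup.of i)⁻¹ := by
  cases b with
  | true => rfl
  | false =>
      rw [if_neg (by simp), FreeGroup.of, FreeGroup.inv_mk]
      rfl

lemma norm_lift_le (a : Fin m → FreeGroup (Fin m')) (L : ℕ)
    (hL : ∀ i, FreeGroup.norm (a i) ≤ L) (w : FreeGroup (Fin m)) :
    FreeGroup.norm (FreeGroup.lift a w) ≤ L * FreeGroup.norm w := by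
  generalize hn : FreeGroup.norm w = n
  induction n using Nat.strong_induction_on generalizing w with
  | _ n ih =>
    cases n with
    | zero =>
        have : w = 1 := FreeGroup.norm_eq_zero.mp hn
        subst this
        simp [FreeGroup.norm_one]
    | succ k =>
        have hw : w ≠ 1 := fun hh => by simp [hh, FreeGroup.norm_one] at hn
        obtain ⟨⟨i, b⟩, v, rfl, hnv⟩ := exists_head' hw
        have hnv' : FreeGroup.norm v = k := by omega
        have h1 : FreeGroup.norm (FreeGroup.lift a (FreeGroup.mk [(i, b)])) ≤ L := by
          rw [mk_single]
          cases b with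
          | true => simpa [FreeGroup.lift_apply_of] using hL i
          | false => simpa [FreeGroup.lift_apply_of, FreeGroup.norm_inv_eq] using hL i
        calc FreeGroup.norm (FreeGroup.lift a (FreeGroup.mk [(i, b)] * v))
            ≤ FreeGroup.norm (FreeGroup.lift a (FreeGroup.mk [(i, b)]))
              + FreeGroup.norm (FreeGroup.lift a v) := by
              rw [_root_.map_mul]; exact FreeGroup.norm_mul_le _ _
          _ ≤ L + L * k := by
              have := ih k (by omega) v hnv'
              omega
          _ ≤ L * (k + 1) := by ring_nf; omega

/-- Correction lemma: expressions for `w * (Φ w)⁻¹`. -/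
lemma corr (R : Finset (FreeGroup (Fin m))) (Φ : FreeGroup (Fin m) →* FreeGroup (Fin m))
    (d : Fin m × Bool → List (FreeGroup (Fin m) × FreeGroup (Fin m)))
    (hd : ∀ x, Valid R (d x) ∧ pc (d x) = FreeGroup.mk [x] * (Φ (FreeGroup.mk [x]))⁻¹)
    (c : ℕ) (hc : ∀ x, (d x).length ≤ c) (w : FreeGroup (Fin m)) :
    ∃ L, Valid R L ∧ pc L = w * (Φ w)⁻¹ ∧ L.length ≤ c * FreeGroup.norm w := by
  generalize hn : FreeGroup.norm w = n
  induction n using Nat.strong_induction_on generalizing w with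
  | _ n ih =>
    cases n with
    | zero =>
        have : w = 1 := FreeGroup.norm_eq_zero.mp hn
        subst this
        exact ⟨[], fun p hp => absurd hp List.not_mem_nil, by simp [pc_nil], by simp⟩
    | succ k =>
        have hw : w ≠ 1 := fun hh => by simp [hh, FreeGroup.norm_one] at hn
        obtain ⟨x, v, rfl, hnv⟩ := exists_head' hw
        have hnv' : FreeGroup.norm v = k := by omega
        obtain ⟨Lv, hvv, hpv, hlv⟩ := ih k (by omega) v hnv'
        refine ⟨(Lv.map fun p => (p.1, p.2 * (FreeGroup.mk [x])⁻¹)) ++ d x, ?_, ?_, ?_⟩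
        · intro p hp
          rcases List.mem_append.mp hp with h | h
          · obtain ⟨q, hq, rfl⟩ := List.mem_map.mp h
            exact hvv q hq
          · exact (hd x).1 p h
        · rw [pc_append, pc_conj, hpv, (hd x).2, _root_.map_mul]
          group
        · rw [List.length_append, List.length_map]
          have := hc x
          calc Lv.length + (d x).length ≤ c * k + c := by omega
            _ = c * (k + 1) := by ring

/-- Substitution lemma. -/
lemma subst (R : Finset (FreeGroup (Fin m)))
    (ψ' : FreeGroup (Fin m') →* FreeGroup (Fin m))
    (S' : Finset (FreeGroup (Fin m')))
    (e : FreeGroup (Fin m') → List (FreeGroup (Fin m) × FreeGroup (Fin m)))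
    (he : ∀ r' ∈ S', Valid R (e r') ∧ pc (e r') = ψ' r')
    (c : ℕ) (hc : ∀ r' ∈ S', (e r').length ≤ c)
    (l' : List (FreeGroup (Fin m') × FreeGroup (Fin m')))
    (hl' : ∀ p ∈ l', p.1 ∈ S') :
    ∃ L, Valid R L ∧ pc L = ψ' (pc l') ∧ L.length ≤ c * l'.length := by
  induction l' with
  | nil =>
      exact ⟨[], fun p hp => absurd hp List.not_mem_nil, by simp [pc_nil], by simp⟩
  | cons hd t ih =>
      obtain ⟨Lt, hvt, hpt, hlt⟩ := ih fun p hp => hl' p (List.mem_cons_of_mem _ hp)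
      have hS : hd.1 ∈ S' := hl' hd List.mem_cons_self
      refine ⟨((e hd.1).map fun p => (p.1, p.2 * ψ' hd.2)) ++ Lt, ?_, ?_, ?_⟩
      · intro p hp
        rcases List.mem_append.mp hp with h | h
        · obtain ⟨q, hq, rfl⟩ := List.mem_map.mp h
          exact (he hd.1 hS).1 q hq
        · exact hvt p h
      · rw [pc_append, pc_conj, (he hd.1 hS).2, hpt, pc_cons, _root_.map_mul, _root_.map_mul,
          _root_.map_mul, _root_.map_inv]
      · rw [List.length_append, List.length_map, List.length_cons]
        have := hc hd.1 hS
        calc (e hd.1).length + Lt.length ≤ c + c * t.length := by omega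
          _ = c * (t.length + 1) := by ring

lemma norm_finite (m n : ℕ) : {w : FreeGroup (Fin m) | FreeGroup.norm w ≤ n}.Finite := by
  have h : {w : FreeGroup (Fin m) | FreeGroup.norm w ≤ n}
      ⊆ FreeGroup.toWord ⁻¹' {l | l.length ≤ n} := fun w hw => hw
  exact Set.Finite.subset
    ((List.finite_length_le _ n).preimage (Set.injOn_of_injective FreeGroup.toWord_injective)) h

lemma bddAboveSet (R : Finset (FreeGroup (Fin m))) (n : ℕ) :
    BddAbove { A | ∃ (w u : FreeGroup (Fin m)) (p : ℤ),
      FreeGroup.norm w + FreeGroup.norm u ≤ n ∧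
      w * u ^ p ∈ Subgroup.normalClosure (R : Set (FreeGroup (Fin m))) ∧
      HalfOrderBound R u p ∧
      A = area R (w * u ^ p) + p.natAbs * n } := by
  set N := Subgroup.normalClosure (R : Set (FreeGroup (Fin m))) with hN
  apply Set.Finite.bddAbove
  have hP : ∀ x : FreeGroup (Fin m) × FreeGroup (Fin m),
      {p : ℤ | x.1 * x.2 ^ p ∈ N ∧ HalfOrderBound R x.2 p}.Finite := by
    intro x
    by_cases h : ∃ k : ℕ, 0 < k ∧ x.2 ^ k ∈ N
    · obtain ⟨k, hk, hmem⟩ := h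
      apply (Set.finite_Icc (-(k : ℤ)) k).subset
      rintro p ⟨-, hhob⟩
      have h2 := hhob k hk hmem
      have hp : p.natAbs ≤ k := by omega
      have hp' : |p| ≤ (k : ℤ) := by
        rw [Int.abs_eq_natAbs]; exact_mod_cast hp
      exact Set.mem_Icc.mpr (abs_le.mp hp')
    · apply Set.Subsingleton.finite
      rintro p ⟨hp1, -⟩ q ⟨hq1, -⟩
      by_contra hne
      apply h
      have hmem : x.2 ^ (p - q) ∈ N := by
        have h2 := mul_mem (inv_mem hq1) hp1
        have heq : (x.1 * x.2 ^ q)⁻¹ * (x.1 * x.2 ^ p) = x.2 ^ (p - q) := by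
          rw [mul_inv_rev, sub_eq_add_neg, zpow_add, zpow_neg]
          group
        rwa [heq] at h2
      refine ⟨(p - q).natAbs, Int.natAbs_pos.mpr (sub_ne_zero.mpr hne), ?_⟩
      rcases Int.natAbs_eq (p - q) with he | he
      · have : x.2 ^ (((p - q).natAbs : ℤ)) ∈ N := he ▸ hmem
        rwa [zpow_natCast] at this
      · have : x.2 ^ (-((p - q).natAbs : ℤ)) ∈ N := by rw [← he]; exact hmem
        rw [zpow_neg] at this
        have := inv_mem this
        rwa [inv_inv, zpow_natCast] at this
  have hWU : {x : FreeGroup (Fin m) × FreeGroup (Fin m) |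
      FreeGroup.norm x.1 ≤ n ∧ FreeGroup.norm x.2 ≤ n}.Finite := by
    apply Set.Finite.subset ((norm_finite m n).prod (norm_finite m n))
    rintro x ⟨h1, h2⟩
    exact ⟨h1, h2⟩
  have hT : (⋃ x ∈ {x : FreeGroup (Fin m) × FreeGroup (Fin m) |
      FreeGroup.norm x.1 ≤ n ∧ FreeGroup.norm x.2 ≤ n},
      (fun p : ℤ => area R (x.1 * x.2 ^ p) + p.natAbs * n) ''
        {p : ℤ | x.1 * x.2 ^ p ∈ N ∧ HalfOrderBound R x.2 p}).Finite :=
    Set.Finite.biUnion hWU fun x _ => (hP x).image _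
  apply hT.subset
  rintro A ⟨w, u, p, hn1, hmem, hhob, rfl⟩
  have hw : FreeGroup.norm w ≤ n := by omega
  have hu : FreeGroup.norm u ≤ n := by omega
  exact Set.mem_biUnion (show FreeGroup.norm (w, u).1 ≤ n ∧ FreeGroup.norm (w, u).2 ≤ n
    from ⟨hw, hu⟩) ⟨p, ⟨hmem, hhob⟩, by simp⟩

lemma oneSide {Q : Type} [Group Q]
    {m m' : ℕ} (R : Finset (FreeGroup (Fin m))) (φ : FreeGroup (Fin m) →* Q)
    (hsurj : Function.Surjective φ)
    (hker : φ.ker = Subgroup.normalClosure (R : Set (FreeGroup (Fin m))))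
    (R' : Finset (FreeGroup (Fin m'))) (φ' : FreeGroup (Fin m') →* Q)
    (hsurj' : Function.Surjective φ')
    (hker' : φ'.ker = Subgroup.normalClosure (R' : Set (FreeGroup (Fin m')))) :
    ∃ C : ℕ, 0 < C ∧ ∀ n,
      relCyclicsDehn R n ≤ C * relCyclicsDehn R' (C * n + C) + C * n + C := by
  choose a ha using fun i : Fin m => hsurj' (φ (FreeGroup.of i))
  choose b hb using fun j : Fin m' => hsurj (φ' (FreeGroup.of j))
  set ψ : FreeGroup (Fin m) →* FreeGroup (Fin m') := FreeGroup.lift a with hψdef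
  set ψ' : FreeGroup (Fin m') →* FreeGroup (Fin m) := FreeGroup.lift b with hψ'def
  have hψφ : ∀ g, φ' (ψ g) = φ g := by
    intro g
    have hcomp : φ'.comp ψ = φ := FreeGroup.ext_hom _ _ fun i => by
      rw [MonoidHom.comp_apply, hψdef, FreeGroup.lift_apply_of]; exact ha i
    exact DFunLike.congr_fun hcomp g
  have hψ'φ : ∀ g, φ (ψ' g) = φ' g := by
    intro g
    have hcomp : φ.comp ψ' = φ' := FreeGroup.ext_hom _ _ fun j => by
      rw [MonoidHom.comp_apply, hψ'def, FreeGroup.lift_apply_of]; exact hb j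
    exact DFunLike.congr_fun hcomp g
  set Φ : FreeGroup (Fin m) →* FreeGroup (Fin m) := ψ'.comp ψ with hΦdef
  have hΦ : ∀ g, φ (Φ g) = φ g := fun g => by
    rw [hΦdef, MonoidHom.comp_apply, hψ'φ, hψφ]
  have hmemN : ∀ g : FreeGroup (Fin m),
      g ∈ Subgroup.normalClosure (R : Set (FreeGroup (Fin m))) ↔ φ g = 1 := fun g => by
    rw [← hker, MonoidHom.mem_ker]
  have hmemN' : ∀ g : FreeGroup (Fin m'),
      g ∈ Subgroup.normalClosure (R' : Set (FreeGroup (Fin m'))) ↔ φ' g = 1 := fun g => by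
    rw [← hker', MonoidHom.mem_ker]
  set L := (Finset.univ.sup fun i : Fin m => FreeGroup.norm (a i)) + 1 with hLdef
  have hLa : ∀ i, FreeGroup.norm (a i) ≤ L := fun i => by
    rw [hLdef]
    have h0 : FreeGroup.norm (a i) ≤ Finset.univ.sup fun i : Fin m => FreeGroup.norm (a i) := by
      exact Finset.le_sup (f := fun i : Fin m => FreeGroup.norm (a i)) (Finset.mem_univ i)
    omega
  have hnormψ : ∀ g, FreeGroup.norm (ψ g) ≤ L * FreeGroup.norm g := norm_lift_le a L hLa
  set S' : Finset (FreeGroup (Fin m')) := R' ∪ R'.image (·⁻¹) with hS'def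
  have hS'ker : ∀ r' ∈ S', φ' r' = 1 := by
    intro r' hr'
    rcases Finset.mem_union.mp hr' with h | h
    · exact (hmemN' r').mp (Subgroup.subset_normalClosure h)
    · obtain ⟨s, hs, rfl⟩ := Finset.mem_image.mp h
      rw [_root_.map_inv, (hmemN' s).mp (Subgroup.subset_normalClosure hs), inv_one]
  have hee : ∀ r' : FreeGroup (Fin m'), ∃ l, r' ∈ S' → Valid R l ∧ pc l = ψ' r' := by
    intro r'
    by_cases h : r' ∈ S'
    · have hmm : ψ' r' ∈ Subgroup.normalClosure (R : Set (FreeGroup (Fin m))) :=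
        (hmemN _).mpr (by rw [hψ'φ]; exact hS'ker r' h)
      obtain ⟨l, hv, hp⟩ := exists_pc_of_mem hmm
      exact ⟨l, fun _ => ⟨hv, hp⟩⟩
    · exact ⟨[], fun hh => absurd hh h⟩
  choose e he using hee
  set c1 := (S'.sup fun r' => (e r').length) + 1 with hc1def
  have hc1 : ∀ r' ∈ S', (e r').length ≤ c1 := fun r' h => by
    rw [hc1def]
    have h0 : (e r').length ≤ S'.sup fun r' => (e r').length := by
      exact Finset.le_sup (f := fun r' => (e r').length) h
    omega
  have hdd : ∀ x : Fin m × Bool, ∃ l, Valid R l ∧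
      pc l = FreeGroup.mk [x] * (Φ (FreeGroup.mk [x]))⁻¹ := by
    intro x
    apply exists_pc_of_mem
    apply (hmemN _).mpr
    rw [_root_.map_mul, _root_.map_inv, hΦ, mul_inv_cancel]
  choose d hd using hdd
  set c2 := (Finset.univ.sup fun x : Fin m × Bool => (d x).length) + 1 with hc2def
  have hc2 : ∀ x, (d x).length ≤ c2 := fun x => by
    rw [hc2def]
    have h0 : (d x).length ≤ Finset.univ.sup fun x : Fin m × Bool => (d x).length := by
      exact Finset.le_sup (f := fun x : Fin m × Bool => (d x).length) (Finset.mem_univ x)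
    omega
  have key : ∀ W : FreeGroup (Fin m),
      W ∈ Subgroup.normalClosure (R : Set (FreeGroup (Fin m))) →
      area R W ≤ c1 * area R' (ψ W) + c2 * FreeGroup.norm W := by
    intro W hW
    have hψW : ψ W ∈ Subgroup.normalClosure (R' : Set (FreeGroup (Fin m'))) :=
      (hmemN' _).mpr (by rw [hψφ]; exact (hmemN _).mp hW)
    obtain ⟨l', hv', hp', hlen'⟩ := exists_min_pc hψW
    have hl'S : ∀ q ∈ l', q.1 ∈ S' := by
      intro q hq
      rcases hv' q hq with h | h
      · exact Finset.mem_union_left _ h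
      · exact Finset.mem_union_right _ (Finset.mem_image.mpr ⟨q.1⁻¹, h, inv_inv _⟩)
    obtain ⟨L1, hv1, hp1, hlen1⟩ := subst R ψ' S' e (fun r' h => he r' h) c1 hc1 l' hl'S
    obtain ⟨L0, hv0, hp0, hlen0⟩ := corr R Φ d hd c2 hc2 W
    have hpc : pc (L0 ++ L1) = W := by
      rw [pc_append, hp0, hp1, hp']
      have hWW : Φ W = ψ' (ψ W) := rfl
      rw [← hWW]; group
    have harea := area_le (L0 ++ L1) (fun p hp => by
      rcases List.mem_append.mp hp with h | h
      exacts [hv0 p h, hv1 p h]) hpc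
    rw [List.length_append] at harea
    calc area R W ≤ L0.length + L1.length := harea
      _ ≤ c2 * FreeGroup.norm W + c1 * l'.length := Nat.add_le_add hlen0 hlen1
      _ = c1 * area R' (ψ W) + c2 * FreeGroup.norm W := by rw [hlen']; ring
  refine ⟨L + c1 + c2 + 1, by omega, fun n => ?_⟩
  set C := L + c1 + c2 + 1 with hCdef
  set n' := C * n + C with hn'def
  show relCyclicsDehn R n ≤ C * relCyclicsDehn R' n' + C * n + C
  rw [relCyclicsDehn]
  apply csSup_le
  · exact ⟨area R ((1 : FreeGroup (Fin m)) * 1 ^ (0 : ℤ)) + (0 : ℤ).natAbs * n, 1, 1, 0,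
      by simp, by simpa using one_mem _, fun k hk _ => by simp, rfl⟩
  rintro A ⟨w, u, p, hnorm, hmem, hhob, rfl⟩
  have hψWmem : ψ w * (ψ u) ^ p = ψ (w * u ^ p) := by
    rw [_root_.map_mul, map_zpow]
  set M' := area R' (ψ (w * u ^ p)) with hM'def
  set A' := M' + p.natAbs * n' with hA'def
  have hmemA' : A' ∈ { B | ∃ (w' u' : FreeGroup (Fin m')) (p' : ℤ),
      FreeGroup.norm w' + FreeGroup.norm u' ≤ n' ∧
      w' * u' ^ p' ∈ Subgroup.normalClosure (R' : Set (FreeGroup (Fin m'))) ∧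
      HalfOrderBound R' u' p' ∧
      B = area R' (w' * u' ^ p') + p'.natAbs * n' } := by
    refine ⟨ψ w, ψ u, p, ?_, ?_, ?_, ?_⟩
    · calc FreeGroup.norm (ψ w) + FreeGroup.norm (ψ u)
          ≤ L * FreeGroup.norm w + L * FreeGroup.norm u :=
            Nat.add_le_add (hnormψ w) (hnormψ u)
        _ = L * (FreeGroup.norm w + FreeGroup.norm u) := by ring
        _ ≤ L * n := Nat.mul_le_mul_left _ hnorm
        _ ≤ C * n := Nat.mul_le_mul (by omega) le_rfl
        _ ≤ n' := by omega
    · rw [hψWmem]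
      exact (hmemN' _).mpr (by rw [hψφ]; exact (hmemN _).mp hmem)
    · intro k hk hku
      apply hhob k hk
      apply (hmemN _).mpr
      have h1 : φ' ((ψ u) ^ k) = 1 := (hmemN' _).mp hku
      rw [map_pow, hψφ] at h1
      rw [map_pow]
      exact h1
    · rw [hψWmem]
  have hA'le : A' ≤ relCyclicsDehn R' n' := le_csSup (bddAboveSet R' n') hmemA'
  have h1 : area R (w * u ^ p) ≤ c1 * M' + c2 * FreeGroup.norm (w * u ^ p) := key _ hmem
  have h2 : FreeGroup.norm (w * u ^ p) ≤ n + p.natAbs * n := by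
    have ha1 := FreeGroup.norm_mul_le w (u ^ p)
    have ha2 := norm_zpow_le u p
    have ha3 : p.natAbs * FreeGroup.norm u ≤ p.natAbs * n :=
      Nat.mul_le_mul le_rfl (by omega)
    omega
  have h3 : M' ≤ A' := Nat.le_add_right _ _
  have h4 : p.natAbs * n ≤ A' := by
    have hnn' : n ≤ n' := by
      have : 1 * n ≤ C * n := Nat.mul_le_mul (by omega) le_rfl
      omega
    have : p.natAbs * n ≤ p.natAbs * n' := Nat.mul_le_mul le_rfl hnn'
    omega
  calc area R (w * u ^ p) + p.natAbs * n
      ≤ (c1 * M' + c2 * FreeGroup.norm (w * u ^ p)) + p.natAbs * n :=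
        Nat.add_le_add_right h1 _
    _ ≤ (c1 * M' + c2 * (n + p.natAbs * n)) + p.natAbs * n :=
        Nat.add_le_add_right (Nat.add_le_add_left (Nat.mul_le_mul le_rfl h2) _) _
    _ = (c1 * M' + c2 * n) + (c2 + 1) * (p.natAbs * n) := by ring
    _ ≤ (c1 * A' + c2 * n) + (c2 + 1) * A' :=
        Nat.add_le_add (Nat.add_le_add_right (Nat.mul_le_mul le_rfl h3) _)
          (Nat.mul_le_mul le_rfl h4)
    _ = (c1 + c2 + 1) * A' + c2 * n := by ring
    _ ≤ C * relCyclicsDehn R' n' + C * n :=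
        Nat.add_le_add (Nat.mul_le_mul (by rw [hCdef]; omega) hA'le)
          (Nat.mul_le_mul (by rw [hCdef]; omega) le_rfl)
    _ ≤ C * relCyclicsDehn R' n' + C * n + C := Nat.le_add_right _ _

end RelCycAux

/-- The rel-cyclics Dehn function of a finitely presented group is independent of the chosen
finite presentation, up to coarse bi-Lipschitz equivalence of functions. -/
theorem relCyclicsDehn_presentation_invariant
    (Q : Type) [Group Q]
    (m : ℕ) (R : Finset (FreeGroup (Fin m))) (φ : FreeGroup (Fin m) →* Q)
    (hsurj : Function.Surjective φ)
    (hker : φ.ker = Subgroup.normalClosure (R : Set (FreeGroup (Fin m))))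
    (m' : ℕ) (R' : Finset (FreeGroup (Fin m'))) (φ' : FreeGroup (Fin m') →* Q)
    (hsurj' : Function.Surjective φ')
    (hker' : φ'.ker = Subgroup.normalClosure (R' : Set (FreeGroup (Fin m')))) :
    (∃ C : ℕ, 0 < C ∧ ∀ n,
      relCyclicsDehn R n ≤ C * relCyclicsDehn R' (C * n + C) + C * n + C) ∧
    (∃ C : ℕ, 0 < C ∧ ∀ n,
      relCyclicsDehn R' n ≤ C * relCyclicsDehn R (C * n + C) + C * n + C) := by
  constructor
  · exact RelCycAux.oneSide R φ hsurj hker R' φ' hsurj' hker'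
  · exact RelCycAux.oneSide R' φ' hsurj' hker' R φ hsurj hker
end
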